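/- Let G be a cyclic group of even order n ≥ 4. Then there is no zero-sum sequence A over G with ρ(L(A)) = n/2 such that max L(A) − 1 ∈ L(A). -/

import Mathlib

def IsMinZS {G : Type*} [AddCommGroup G] (U : Multiset G) : Prop :=
  U ≠ 0 ∧ U.sum = 0 ∧ ∀ V ≤ U, V ≠ 0 → V.sum = 0 → V = U

noncomputable def DavC (G : Type*) [AddCommGroup G] : ℕ :=
  sSup {n | ∃ U : Multiset G, IsMinZS U ∧ U.card = n}

def LSet {G : Type*} [AddCommGroup G] (A : Multiset G) : Set ℕ :=
  {k | ∃ l : Multiset (Multiset G), l.card = k ∧ (∀ U ∈ l, IsMinZS U) ∧ l.sum = A}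

noncomputable def rhoSet (L : Set ℕ) : ℚ := ((sSup L : ℕ) : ℚ) / ((sInf L : ℕ) : ℚ)

def IsIntervalSet (L : Set ℕ) : Prop := L.Nonempty ∧ L = Set.Icc (sInf L) (sSup L)

/-!
Write `M = max L(A)` and `l = min L(A)`, so `ρ(L(A)) = n/2` says `2M = n l`. Every minimal
zero-sum sequence `U` satisfies `2 ≤ |U| + v₀(U)` and `|U| + (n-1) v₀(U) ≤ n` (Davenport), and
summing these over a longest and a shortest factorization forces `0 ∉ A` and `|A| = 2M = n l`.
So a longest factorization consists of pairs `{x, -x}`, which makes `A = -A`, and a shortest one of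
blocks of length `n`, all of whose elements generate `G`. Generators map to `1` under `G → ℤ/2`, so
every block dividing `A` has even length, and a factorization of length `M - 1` is then pairs plus
one block of length 4. That block is symmetric because `A` and the pairs are, so it contains some
`{x, -x}` with `x ≠ -x`, contradicting minimality.
-/

namespace Multiset

variable {α : Type*}

theorem card_sum_eq_sum_map_card (F : Multiset (Multiset α)) :
    card F.sum = (F.map card).sum :=
  card_join F

theorem card_le_card_sum {F : Multiset (Multiset α)} (hF : ∀ U ∈ F, U ≠ 0) :
    card F ≤ card F.sum := by
  have := card_nsmul_le_sum (s := F.map card) (a := 1) (by simpa [Nat.one_le_iff_ne_zero])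
  simpa [card_sum_eq_sum_map_card] using this

theorem count_sum_eq_sum_map_count [DecidableEq α] (a : α) (F : Multiset (Multiset α)) :
    count a F.sum = (F.map (count a)).sum :=
  map_multiset_sum (countAddMonoidHom a) F

theorem forall_eq_of_le_of_sum_map_le {s : Multiset α} {f : α → ℕ} {m : ℕ}
    (h : ∀ a ∈ s, m ≤ f a) (hs : (s.map f).sum ≤ card s * m) : ∀ a ∈ s, f a = m := by
  by_contra! ⟨a, ha, hne⟩
  have := sum_lt_sum (f := fun _ ↦ m) h ⟨a, ha, (h a ha).lt_of_ne' hne⟩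
  simp only [map_const', sum_replicate, smul_eq_mul] at this
  omega

theorem forall_eq_of_le_of_le_sum_map {s : Multiset α} {f : α → ℕ} {m : ℕ}
    (h : ∀ a ∈ s, f a ≤ m) (hs : card s * m ≤ (s.map f).sum) : ∀ a ∈ s, f a = m := by
  by_contra! ⟨a, ha, hne⟩
  have := sum_lt_sum (g := fun _ ↦ m) h ⟨a, ha, (h a ha).lt_of_ne hne⟩
  simp only [map_const', sum_replicate, smul_eq_mul] at this
  omega

theorem exists_eq_cons_of_sum_map_eq {s : Multiset α} {f : α → ℕ}
    (h : ∀ a ∈ s, 2 ≤ f a ∧ Even (f a)) (hs : (s.map f).sum = 2 * card s + 2) :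
    ∃ a t, s = a ::ₘ t ∧ f a = 4 ∧ ∀ b ∈ t, f b = 2 := by
  classical
  obtain ⟨a, ha, hne⟩ : ∃ a ∈ s, f a ≠ 2 := by
    by_contra! hall
    rw [map_congr rfl hall, map_const', sum_replicate, smul_eq_mul] at hs
    omega
  obtain ⟨t, rfl⟩ := exists_cons_of_mem ha
  have htail : ∀ b ∈ t, 2 ≤ f b := fun b hb ↦ (h b (mem_cons_of_mem hb)).1
  have hlow := card_nsmul_le_sum (s := t.map f) (a := 2) (by simpa using htail)
  obtain ⟨hge, k, hk⟩ := h a ha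
  simp only [map_cons, sum_cons, card_cons] at hs
  simp only [card_map, smul_eq_mul] at hlow
  have hfa : f a = 4 := by omega
  exact ⟨a, t, rfl, hfa, forall_eq_of_le_of_sum_map_le htail (by linarith)⟩

end Multiset

open Multiset

theorem two_mul_sSup_eq_of_rhoSet_eq {L : Set ℕ} {n : ℕ} (hn : n ≠ 0)
    (h : rhoSet L = n / 2) : sInf L ≠ 0 ∧ 2 * sSup L = n * sInf L := by
  unfold rhoSet at h
  have hl : sInf L ≠ 0 := by
    intro h0
    rw [h0, Nat.cast_zero, div_zero, eq_comm, div_eq_zero_iff] at h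
    norm_num [hn] at h
  refine ⟨hl, ?_⟩
  rw [div_eq_div_iff (by exact_mod_cast hl) two_ne_zero] at h
  exact_mod_cast (by linarith : (2 : ℚ) * sSup L = n * sInf L)

section ZeroSum

variable {G : Type*} [AddCommGroup G]

def IsZeroSumFree (S : Multiset G) : Prop := ∀ V ≤ S, V.sum = 0 → V = 0

theorem IsMinZS.isZeroSumFree_of_lt {B S : Multiset G} (hB : IsMinZS B) (hS : S < B) :
    IsZeroSumFree S := by
  intro V hV hV0
  by_contra hne
  exact hS.not_ge (hB.2.2 V (hV.trans hS.le) hne hV0 ▸ hV)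

theorem IsZeroSumFree.injective_sum_take {L : List G} (hL : IsZeroSumFree (L : Multiset G)) :
    Function.Injective fun i : Fin (L.length + 1) ↦ (L.take i).sum := by
  have key : ∀ i j : ℕ, i < j → j ≤ L.length → (L.take i).sum ≠ (L.take j).sum := by
    intro i j hij hj heq
    have hsplit := congrArg List.sum (List.take_append_drop i (L.take j))
    rw [List.sum_append, List.take_take, min_eq_left hij.le, ← heq, add_eq_left] at hsplit
    have hsub : ((L.take j).drop i : Multiset G) ≤ L :=
      coe_le.mpr ((List.drop_sublist _ _).trans (List.take_sublist _ _)).subperm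
    have hnil := hL _ hsub (by simpa using hsplit)
    have hlen : ((L.take j).drop i).length = j - i := by simp; omega
    simp only [coe_eq_zero] at hnil
    simp [hnil] at hlen
    omega
  intro i j h
  rcases lt_trichotomy (i : ℕ) j with hlt | heq | hgt
  · exact absurd h (key _ _ hlt (by omega))
  · exact Fin.ext heq
  · exact absurd h.symm (key _ _ hgt (by omega))

theorem IsMinZS.eq_singleton_zero {B : Multiset G} (hB : IsMinZS B) (h0 : (0 : G) ∈ B) :
    B = {0} :=
  (hB.2.2 {0} (singleton_le.mpr h0) (singleton_ne_zero 0) (sum_singleton 0)).symm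

theorem IsMinZS.two_le_card {B : Multiset G} (hB : IsMinZS B) (h0 : (0 : G) ∉ B) :
    2 ≤ card B := by
  by_contra! h
  obtain ⟨x, rfl⟩ : ∃ x, B = {x} := card_eq_one.mp (by have := card_pos.mpr hB.1; omega)
  exact h0 (by simpa using hB.2.1.symm)

theorem IsMinZS.two_le_card_add_count_zero [DecidableEq G] {B : Multiset G} (hB : IsMinZS B) :
    2 ≤ card B + count 0 B := by
  by_cases h0 : (0 : G) ∈ B
  · simp [hB.eq_singleton_zero h0]
  · have := hB.two_le_card h0
    omega

theorem IsMinZS.map_neg_eq_self_of_card_eq_two {B : Multiset G} (hB : IsMinZS B)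
    (h2 : card B = 2) : B.map Neg.neg = B := by
  obtain ⟨x, y, rfl⟩ := card_eq_two.mp h2
  obtain rfl : y = -x := eq_neg_of_add_eq_zero_right (by simpa using hB.2.1)
  simpa using cons_swap (-x) x 0

theorem IsMinZS.card_eq_two_of_map_neg_eq_self {B : Multiset G} (hB : IsMinZS B)
    (hsymm : B.map Neg.neg = B) (h2 : ∀ x ∈ B, 2 • x ≠ 0) : card B = 2 := by
  obtain ⟨x, hx⟩ := exists_mem_of_ne_zero hB.1
  have hnx : -x ∈ B := hsymm ▸ mem_map_of_mem _ hx
  have hne : x ≠ -x := by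
    rw [Ne, eq_neg_iff_add_eq_zero, ← two_nsmul]
    exact h2 x hx
  have hle : ({x, -x} : Multiset G) ≤ B :=
    (le_iff_subset (by simp [hne])).mpr (by simp [cons_subset, hx, hnx])
  rw [← hB.2.2 _ hle (by simp) (by simp)]
  simp

theorem two_mul_card_le_card_sum_add_count_zero [DecidableEq G]
    {F : Multiset (Multiset G)} (hF : ∀ U ∈ F, IsMinZS U) :
    2 * card F ≤ card F.sum + count 0 F.sum := by
  have := card_nsmul_le_sum (s := F.map fun U ↦ card U + count 0 U) (a := 2)
    (by simpa using fun U hU ↦ (hF U hU).two_le_card_add_count_zero)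
  simp only [sum_map_add, card_map, smul_eq_mul] at this
  rwa [card_sum_eq_sum_map_card, count_sum_eq_sum_map_count, mul_comm]

theorem forall_card_eq_two {F : Multiset (Multiset G)} (hF : ∀ U ∈ F, IsMinZS U)
    (h0 : (0 : G) ∉ F.sum) (hcard : card F.sum = 2 * card F) :
    ∀ U ∈ F, card U = 2 :=
  forall_eq_of_le_of_sum_map_le
    (fun U hU ↦ (hF U hU).two_le_card fun h ↦ h0 (mem_of_le (le_sum_of_mem hU) h))
    (by rw [← card_sum_eq_sum_map_card, hcard, mul_comm])

theorem map_neg_sum_eq_self {F : Multiset (Multiset G)} (hF : ∀ U ∈ F, IsMinZS U)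
    (h2 : ∀ U ∈ F, card U = 2) : F.sum.map Neg.neg = F.sum := by
  have := map_join Neg.neg F
  rw [map_congr rfl fun U hU ↦ (hF U hU).map_neg_eq_self_of_card_eq_two (h2 U hU), map_id'] at this
  exact this

theorem IsMinZS.card_eq_two_of_map_neg_add_sum_eq_self {B : Multiset G} (hB : IsMinZS B)
    {F : Multiset (Multiset G)} (hF : ∀ U ∈ F, IsMinZS U) (h2 : ∀ U ∈ F, card U = 2)
    (hsymm : (B + F.sum).map Neg.neg = B + F.sum) (hx : ∀ x ∈ B, 2 • x ≠ 0) : card B = 2 := by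
  rw [map_add, map_neg_sum_eq_self hF h2] at hsymm
  exact hB.card_eq_two_of_map_neg_eq_self (add_right_cancel hsymm) hx

theorem even_card_of_forall_map_eq_one (φ : G →+ ZMod 2) {B : Multiset G}
    (hφ : ∀ x ∈ B, φ x = 1) (hB : B.sum = 0) : Even (card B) := by
  have h := map_multiset_sum φ B
  rw [hB, _root_.map_zero, map_congr rfl hφ, map_const', sum_replicate, nsmul_one, eq_comm] at h
  exact ZMod.natCast_eq_zero_iff_even.mp h

theorem bddAbove_LSet (A : Multiset G) : BddAbove (LSet A) :=
  ⟨card A, by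
    rintro k ⟨F, rfl, hF, rfl⟩
    exact card_le_card_sum fun U hU ↦ (hF U hU).1⟩

variable [Fintype G]

theorem IsZeroSumFree.card_lt {S : Multiset G} (hS : IsZeroSumFree S) :
    card S < Fintype.card G := by
  rw [← coe_toList S] at hS
  simpa using Fintype.card_le_of_injective _ hS.injective_sum_take

theorem IsZeroSumFree.eq_of_cons_cons {a b : G} {T : Multiset G}
    (hS : IsZeroSumFree (a ::ₘ b ::ₘ T)) (hcard : card T + 3 = Fintype.card G) : a = b := by
  -- the `|G|` prefix sums of `b, a, T` are distinct, so `a` is one of them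
  set L := b :: a :: T.toList
  have hL : (L : Multiset G) = a ::ₘ b ::ₘ T := by
    rw [← cons_coe, ← cons_coe, coe_toList, cons_swap]
  rw [← hL] at hS
  have hbij := (Fintype.bijective_iff_injective_and_card _).mpr
    ⟨hS.injective_sum_take, by simp [L]; omega⟩
  obtain ⟨⟨i, hi⟩, hai⟩ := hbij.2 a
  match i with
  | 0 =>
    have := hS {a} (by simp [hL]) (by simpa using hai.symm)
    simp at this
  | 1 => exact (by simpa [L] using hai : b = a).symm
  | k + 2 =>
    simp only [L, List.take_succ_cons, List.sum_cons] at hai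
    rw [add_left_comm, add_eq_left] at hai
    have hle : (↑(T.toList.take k) : Multiset G) ≤ T := by
      simpa using (coe_le.mpr (List.take_sublist k T.toList).subperm :
        (↑(T.toList.take k) : Multiset G) ≤ ↑T.toList)
    have := hS (b ::ₘ ↑(T.toList.take k))
      (hL ▸ (cons_le_cons b hle).trans (le_cons_self _ a)) (by simpa using hai)
    simp at this

theorem IsMinZS.card_le {B : Multiset G} (hB : IsMinZS B) : card B ≤ Fintype.card G := by
  classical
  obtain ⟨x, hx⟩ := exists_mem_of_ne_zero hB.1
  have := (hB.isZeroSumFree_of_lt (erase_lt.mpr hx)).card_lt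
  rw [card_erase_of_mem hx, Nat.pred_eq_sub_one] at this
  have := card_pos.mpr hB.1
  omega

theorem IsMinZS.addOrderOf_eq_card {B : Multiset G} (hB : IsMinZS B)
    (hcard : card B = Fintype.card G) {x : G} (hx : x ∈ B) : addOrderOf x = Fintype.card G := by
  classical
  set S := B.erase x
  have hS : IsZeroSumFree S := hB.isZeroSumFree_of_lt (erase_lt.mpr hx)
  have hSc : card S + 1 = Fintype.card G := by
    rw [card_erase_of_mem hx, Nat.pred_eq_sub_one, ← hcard]
    have := card_pos.mpr hB.1
    omega
  have hconst : ∀ y ∈ S, ∀ z ∈ S, y = z := by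
    intro y hy z hz
    by_contra hne
    obtain ⟨T, hT⟩ := exists_cons_of_mem hy
    obtain ⟨T', rfl⟩ := exists_cons_of_mem ((mem_cons.mp (hT ▸ hz)).resolve_left (Ne.symm hne))
    rw [hT] at hS hSc
    exact hne (hS.eq_of_cons_cons (by simp at hSc; omega))
  obtain ⟨g, hg⟩ : ∃ g, S = replicate (card S) g := by
    rcases S.empty_or_exists_mem with h | ⟨g, hg⟩
    · exact ⟨0, by simp [h]⟩
    · exact ⟨g, eq_replicate_card.mpr fun y hy ↦ hconst y hy g hg⟩
  have hxg : x = g := by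
    have hsum := hB.2.1
    rw [← cons_erase hx, sum_cons] at hsum
    change x + S.sum = 0 at hsum
    rw [hg, sum_replicate] at hsum
    have hng : (card S + 1) • g = 0 := hSc ▸ card_nsmul_eq_zero
    rw [succ_nsmul', ← hsum] at hng
    exact (add_right_cancel hng).symm
  subst hxg
  by_contra hlt
  have hlt : addOrderOf x < card S + 1 := hSc ▸ lt_of_le_of_ne addOrderOf_le_card_univ hlt
  have := hS (replicate (addOrderOf x) x)
    (hg ▸ (replicate_le_replicate x).mpr (by omega)) (by simp [addOrderOf_nsmul_eq_zero])
  exact (addOrderOf_pos x).ne' (by simpa using congrArg card this)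

theorem IsMinZS.card_add_mul_count_zero_le [DecidableEq G] {B : Multiset G} (hB : IsMinZS B) :
    card B + (Fintype.card G - 1) * count 0 B ≤ Fintype.card G := by
  by_cases h0 : (0 : G) ∈ B
  · simp only [hB.eq_singleton_zero h0, card_singleton, count_singleton_self]
    have := Fintype.card_pos (α := G)
    omega
  · rw [count_eq_zero.mpr h0, mul_zero, add_zero]
    exact hB.card_le

theorem card_sum_add_mul_count_zero_le [DecidableEq G]
    {F : Multiset (Multiset G)} (hF : ∀ U ∈ F, IsMinZS U) :
    card F.sum + (Fintype.card G - 1) * count 0 F.sum ≤ Fintype.card G * card F := by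
  have := sum_le_card_nsmul (F.map fun U ↦ card U + (Fintype.card G - 1) * count 0 U)
    (Fintype.card G) (by simpa using fun U hU ↦ (hF U hU).card_add_mul_count_zero_le)
  simp only [sum_map_add, sum_map_mul_left, card_map, smul_eq_mul] at this
  rwa [card_sum_eq_sum_map_card, count_sum_eq_sum_map_count, mul_comm _ (card F)]

theorem forall_addOrderOf_eq_card {F : Multiset (Multiset G)} (hF : ∀ U ∈ F, IsMinZS U)
    (hcard : Fintype.card G * card F ≤ card F.sum) :
    ∀ x ∈ F.sum, addOrderOf x = Fintype.card G := by
  have hfull := forall_eq_of_le_of_le_sum_map (fun U hU ↦ (hF U hU).card_le)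
    (by rwa [← card_sum_eq_sum_map_card, mul_comm])
  intro x hx
  obtain ⟨U, hU, hxU⟩ := mem_join.mp hx
  exact (hF U hU).addOrderOf_eq_card (hfull U hU) hxU

theorem IsAddCyclic.exists_addMonoidHom_zmod_two (hcyc : IsAddCyclic G)
    (heven : Even (Fintype.card G)) :
    ∃ φ : G →+ ZMod 2, ∀ x, addOrderOf x = Fintype.card G → φ x = 1 := by
  rw [← Nat.card_eq_fintype_card] at heven ⊢
  have : NeZero (Nat.card G) := ⟨Nat.card_pos.ne'⟩
  let e := zmodAddCyclicAddEquiv hcyc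
  refine ⟨(ZMod.castHom heven.two_dvd (ZMod 2)).toAddMonoidHom.comp e.symm.toAddMonoidHom,
    fun x hx ↦ ?_⟩
  set z := e.symm x
  have hz : addOrderOf ((z.val : ℕ) : ZMod (Nat.card G)) = Nat.card G := by
    rw [ZMod.natCast_zmod_val, AddEquiv.addOrderOf_eq, hx]
  rw [ZMod.addOrderOf_coe _ (NeZero.ne _), Nat.div_eq_self] at hz
  have hodd : Odd z.val := Nat.coprime_two_left.mp
    (Nat.Coprime.coprime_dvd_left heven.two_dvd (hz.resolve_left (NeZero.ne _)))
  change ZMod.castHom heven.two_dvd (ZMod 2) z = 1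
  rw [ZMod.castHom_apply, ZMod.cast_eq_val]
  exact ZMod.natCast_eq_one_iff_odd.mpr hodd

section Elasticity

variable [DecidableEq G] {A : Multiset G} (hn : 3 ≤ Fintype.card G) (hne : (LSet A).Nonempty)
  (hρ : 2 * sSup (LSet A) = Fintype.card G * sInf (LSet A))
include hn hne hρ

theorem zero_notMem_and_card_eq_of_two_mul_sSup_eq :
    (0 : G) ∉ A ∧ card A = 2 * sSup (LSet A) := by
  obtain ⟨Fmax, hMax, hFmax, rfl⟩ := Nat.sSup_mem hne (bddAbove_LSet A)
  obtain ⟨Fmin, hMin, hFmin, hFminA⟩ := Nat.sInf_mem hne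
  have hmax := two_mul_card_le_card_sum_add_count_zero hFmax
  have hmin := card_sum_add_mul_count_zero_le hFmin
  rw [hMax] at hmax
  rw [hFminA, hMin, ← hρ] at hmin
  have h2 : 2 * count 0 Fmax.sum ≤ (Fintype.card G - 1) * count 0 Fmax.sum :=
    Nat.mul_le_mul_right _ (by omega)
  exact ⟨count_eq_zero.mp (by omega), by omega⟩

theorem map_neg_eq_self_of_two_mul_sSup_eq : A.map Neg.neg = A := by
  obtain ⟨h0, hcard⟩ := zero_notMem_and_card_eq_of_two_mul_sSup_eq hn hne hρ
  obtain ⟨Fmax, hMax, hFmax, rfl⟩ := Nat.sSup_mem hne (bddAbove_LSet A)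
  exact map_neg_sum_eq_self hFmax (forall_card_eq_two hFmax h0 (by rw [hcard, hMax]))

theorem addOrderOf_eq_card_of_two_mul_sSup_eq : ∀ x ∈ A, addOrderOf x = Fintype.card G := by
  obtain ⟨-, hcard⟩ := zero_notMem_and_card_eq_of_two_mul_sSup_eq hn hne hρ
  obtain ⟨Fmin, hMin, hFmin, rfl⟩ := Nat.sInf_mem hne
  exact forall_addOrderOf_eq_card hFmin (by rw [hcard, hρ, hMin])

end Elasticity

end ZeroSum

theorem stmt6 {G : Type*} [AddCommGroup G] [Fintype G] (n : ℕ) (hn : 4 ≤ n)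
    (heven : Even n) (hcyc : IsAddCyclic G) (hcard : Fintype.card G = n) :
    ¬ ∃ A : Multiset G, A.sum = 0 ∧ rhoSet (LSet A) = (n : ℚ) / 2 ∧
      sSup (LSet A) - 1 ∈ LSet A := by
  classical
  rintro ⟨A, -, hrho, hpred⟩
  obtain ⟨hl, hρ⟩ := two_mul_sSup_eq_of_rhoSet_eq (by omega) hrho
  subst hcard
  have hne : (LSet A).Nonempty := ⟨_, hpred⟩
  obtain ⟨h0, hcardA⟩ := zero_notMem_and_card_eq_of_two_mul_sSup_eq (by omega) hne hρ
  have hsymm := map_neg_eq_self_of_two_mul_sSup_eq (by omega) hne hρ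
  have hord := addOrderOf_eq_card_of_two_mul_sSup_eq (by omega) hne hρ
  obtain ⟨φ, hφ⟩ := hcyc.exists_addMonoidHom_zmod_two heven
  obtain ⟨F, hF, hFmzs, rfl⟩ := hpred
  have hblocks : ∀ U ∈ F, 2 ≤ card U ∧ Even (card U) := fun U hU ↦
    have hUA : U ≤ F.sum := le_sum_of_mem hU
    ⟨(hFmzs U hU).two_le_card fun h ↦ h0 (mem_of_le hUA h),
      even_card_of_forall_map_eq_one φ (fun x hx ↦ hφ x (hord x (mem_of_le hUA hx)))
        (hFmzs U hU).2.1⟩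
  have hM := hρ ▸ Nat.le_mul_of_pos_right (Fintype.card G) (Nat.pos_of_ne_zero hl)
  obtain ⟨B, F2, rfl, hB, hF2⟩ := exists_eq_cons_of_sum_map_eq hblocks
    (by rw [← card_sum_eq_sum_map_card, hF, hcardA]; omega)
  rw [sum_cons] at hsymm hord
  have := (hFmzs B (mem_cons_self _ _)).card_eq_two_of_map_neg_add_sum_eq_self
    (fun U hU ↦ hFmzs U (mem_cons_of_mem hU)) hF2 hsymm fun x hx ↦
      nsmul_ne_zero_of_lt_addOrderOf two_ne_zero (by rw [hord x (mem_add.mpr (.inl hx))]; omega)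
  omega
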